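/- For q ≥ 3 fixed and γ ∈ (0,1), with N → ∞, the quantity A_N = prod over P in 𝕡 of (1 + psi(P)^2 + psi(P)|P|^{-1/2})/(1 + psi(P)^2) satisfies ln A_N ≥ (γ + o(1)) sqrt(ln N · ln ln ln N / ln ln N), where 𝕡 is the set of monic irreducible polynomials P with log_q(q ln N ln ln N) < deg P ≤ log_q(q^{(ln ln N)^γ} ln N ln ln N) and psi(P) = sqrt(ln N · ln ln N / ln ln ln N) · |P|^{-1/2} (deg P − log_q(ln N ln ln N))^{-1}. -/

import Mathlib

open Polynomial

/-- The set 𝕡 of monic irreducible polynomials P with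
log_q(q ln N ln ln N) < deg P ≤ log_q(q^{(ln ln N)^γ} ln N ln ln N). -/
noncomputable def resonatorPrimes (F : Type*) [Field F] [Fintype F] (γ N : ℝ) :
    Set F[X] :=
  {P | P.Monic ∧ Irreducible P ∧
    Real.logb (Fintype.card F)
        ((Fintype.card F : ℝ) * Real.log N * Real.log (Real.log N)) < (P.natDegree : ℝ) ∧
    (P.natDegree : ℝ) ≤ Real.logb (Fintype.card F)
        ((Fintype.card F : ℝ) ^ ((Real.log (Real.log N)) ^ γ) *
          Real.log N * Real.log (Real.log N))}

/-- psi(P) = sqrt(ln N ln ln N / ln ln ln N) |P|^{-1/2} (deg P − log_q(ln N ln ln N))^{-1}. -/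
noncomputable def resonatorPsi (F : Type*) [Field F] [Fintype F] (N : ℝ) (P : F[X]) : ℝ :=
  Real.sqrt (Real.log N * Real.log (Real.log N) / Real.log (Real.log (Real.log N))) /
    Real.sqrt ((Fintype.card F : ℝ) ^ P.natDegree) /
    ((P.natDegree : ℝ) - Real.logb (Fintype.card F) (Real.log N * Real.log (Real.log N)))

/-!
Write x = ln N, y = ln x, z = ln y, a = log_q(x y), T = y^γ and c = √(x y / z), so that
ψ(P) = c |P|^{-1/2} / (deg P - a). The primes of 𝕡 are exactly the monic irreducible polynomials
whose degree n satisfies a + 1 < n ≤ a + T. For them |P| ≥ q x y, hence ψ(P) ≤ 1/100, and the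
logarithm of the factor of P in A_N is at least about ψ(P) |P|^{-1/2} = c / (q^n (n - a)).
Since X^{q^n} - X is the squarefree product of the monic irreducibles of degree dividing n, there
are at least about q^n / n of them of degree n, so degree n contributes about
c / (n (n - a)) ≥ c / ((a + T) (n - a)). Summing over n gives about
c log(T/2) / (a + T) ≈ γ ln q · √(x z / y), and ln q ≥ ln 3 > 1.09 absorbs all constant
losses.
-/

open UniqueFactorizationMonoid Finset

namespace Polynomial

variable {F : Type*} [Field F] [Fintype F]

theorem mem_normalizedFactors_X_pow_card_pow_sub_X [DecidableEq F] {n : ℕ} (hn : n ≠ 0)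
    {P : F[X]} :
    P ∈ normalizedFactors (X ^ Fintype.card F ^ n - X : F[X]) ↔
      P.Monic ∧ Irreducible P ∧ P.natDegree ∣ n := by
  rw [Polynomial.mem_normalizedFactors_iff
    (FiniteField.X_pow_card_pow_sub_X_ne_zero F hn Fintype.one_lt_card)]
  constructor
  · rintro ⟨hirr, hmonic, hdvd⟩
    refine ⟨hmonic, hirr, hirr.natDegree_dvd_of_dvd_X_pow_card_pow_sub_X ?_⟩
    rwa [Nat.card_eq_fintype_card]
  · rintro ⟨hmonic, hirr, hdvd⟩
    refine ⟨hirr, hmonic, ?_⟩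
    rwa [← Nat.card_eq_fintype_card, ← hirr.natDegree_dvd_iff_dvd_X_pow_card_pow_sub_X]

theorem sum_natDegree_normalizedFactors_X_pow_card_pow_sub_X [DecidableEq F] {n : ℕ}
    (hn : n ≠ 0) :
    ∑ P ∈ (normalizedFactors (X ^ Fintype.card F ^ n - X : F[X])).toFinset, P.natDegree =
      Fintype.card F ^ n := by
  set f : F[X] := X ^ Fintype.card F ^ n - X
  have hq : 1 < Fintype.card F ^ n := Nat.one_lt_pow hn Fintype.one_lt_card
  have hf : f.Monic := monic_X_pow_sub (by rw [degree_X]; exact_mod_cast hq)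
  have hsep : Squarefree f := by
    obtain ⟨k, -, hk⟩ := FiniteField.card F (ringChar F)
    refine (galois_poly_separable (ringChar F) _ ?_).squarefree
    rw [hk, ← pow_mul]
    exact dvd_pow_self _ (by positivity)
  have hnodup := (squarefree_iff_nodup_normalizedFactors hf.ne_zero).mp hsep
  rw [Finset.sum_eq_multiset_sum, Multiset.toFinset_val, hnodup.dedup,
    ← natDegree_multiset_prod_of_monic _ (fun P hP => ?_), prod_normalizedFactors_eq hf.ne_zero,
    hf.normalize_eq_self, FiniteField.X_pow_card_sub_X_natDegree_eq F hq]
  exact ((mem_normalizedFactors_X_pow_card_pow_sub_X hn).mp hP).1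

-- Realised inside the factorisation of `X ^ q ^ n - X`, which makes finiteness free.
variable (F) in
noncomputable def monicIrreducibles [DecidableEq F] (n : ℕ) : Finset F[X] :=
  {P ∈ (normalizedFactors (X ^ Fintype.card F ^ n - X : F[X])).toFinset | P.natDegree = n}

variable [DecidableEq F]

theorem mem_monicIrreducibles {n : ℕ} {P : F[X]} :
    P ∈ monicIrreducibles F n ↔ P.Monic ∧ Irreducible P ∧ P.natDegree = n := by
  rcases eq_or_ne n 0 with rfl | hn
  · simp only [monicIrreducibles, pow_zero, pow_one, sub_self, normalizedFactors_zero,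
      Multiset.toFinset_zero, Finset.filter_empty, Finset.notMem_empty, false_iff]
    rintro ⟨hmonic, hirr, hdeg⟩
    exact hirr.not_isUnit (eq_one_of_monic_natDegree_zero hmonic hdeg ▸ isUnit_one)
  · rw [monicIrreducibles, Finset.mem_filter, Multiset.mem_toFinset,
      mem_normalizedFactors_X_pow_card_pow_sub_X hn]
    constructor
    · rintro ⟨⟨hmonic, hirr, -⟩, hdeg⟩
      exact ⟨hmonic, hirr, hdeg⟩
    · rintro ⟨hmonic, hirr, rfl⟩
      exact ⟨⟨hmonic, hirr, dvd_rfl⟩, rfl⟩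

theorem pairwiseDisjoint_monicIrreducibles (s : Set ℕ) :
    s.PairwiseDisjoint (monicIrreducibles F) := fun _ _ _ _ hne =>
  Finset.disjoint_left.mpr fun _ hP hP' =>
    hne ((mem_monicIrreducibles.mp hP).2.2.symm.trans (mem_monicIrreducibles.mp hP').2.2)

theorem sum_natDegree_monicIrreducibles (n : ℕ) :
    ∑ P ∈ monicIrreducibles F n, P.natDegree = n * #(monicIrreducibles F n) := by
  rw [Finset.sum_congr rfl fun P hP => (mem_monicIrreducibles.mp hP).2.2, Finset.sum_const,
    smul_eq_mul, mul_comm]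

theorem mul_card_monicIrreducibles_le (n : ℕ) :
    n * #(monicIrreducibles F n) ≤ Fintype.card F ^ n := by
  rcases eq_or_ne n 0 with rfl | hn
  · simp
  rw [← sum_natDegree_monicIrreducibles,
    ← sum_natDegree_normalizedFactors_X_pow_card_pow_sub_X hn]
  exact Finset.sum_le_sum_of_subset (Finset.filter_subset _ _)

theorem pow_card_lt_mul_card_monicIrreducibles_add (n : ℕ) :
    Fintype.card F ^ n < n * #(monicIrreducibles F n) + Fintype.card F ^ (n / 2 + 1) := by
  set q := Fintype.card F
  have hq : 2 ≤ q := Fintype.one_lt_card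
  rcases eq_or_ne n 0 with rfl | hn
  · simpa using Fintype.one_lt_card
  set R := (normalizedFactors (X ^ q ^ n - X : F[X])).toFinset
  have hsmall : R.filter (·.natDegree ≠ n) ⊆
      (Finset.range (n / 2 + 1)).biUnion (monicIrreducibles F) := by
    intro P hP
    obtain ⟨hPR, hdeg⟩ := Finset.mem_filter.mp hP
    obtain ⟨hmonic, hirr, hdvd⟩ :=
      (mem_normalizedFactors_X_pow_card_pow_sub_X hn).mp (Multiset.mem_toFinset.mp hPR)
    refine Finset.mem_biUnion.mpr ⟨P.natDegree, Finset.mem_range.mpr ?_,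
      mem_monicIrreducibles.mpr ⟨hmonic, hirr, rfl⟩⟩
    by_contra hlarge
    exact hdeg (Nat.eq_of_dvd_of_lt_two_mul hn hdvd (by omega)).symm
  calc q ^ n = ∑ P ∈ R, P.natDegree :=
        (sum_natDegree_normalizedFactors_X_pow_card_pow_sub_X hn).symm
    _ = ∑ P ∈ monicIrreducibles F n, P.natDegree +
          ∑ P ∈ R.filter (·.natDegree ≠ n), P.natDegree :=
      (Finset.sum_filter_add_sum_filter_not _ _ _).symm
    _ ≤ n * #(monicIrreducibles F n) + ∑ d ∈ Finset.range (n / 2 + 1), q ^ d := by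
      rw [sum_natDegree_monicIrreducibles]
      gcongr
      calc ∑ P ∈ R.filter (·.natDegree ≠ n), P.natDegree
          ≤ ∑ P ∈ (Finset.range (n / 2 + 1)).biUnion (monicIrreducibles F), P.natDegree :=
            Finset.sum_le_sum_of_subset hsmall
        _ = ∑ d ∈ Finset.range (n / 2 + 1), ∑ P ∈ monicIrreducibles F d, P.natDegree :=
            Finset.sum_biUnion (pairwiseDisjoint_monicIrreducibles (F := F) _)
        _ ≤ ∑ d ∈ Finset.range (n / 2 + 1), q ^ d := Finset.sum_le_sum fun d _ =>
            (sum_natDegree_monicIrreducibles d).trans_le (mul_card_monicIrreducibles_le d)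
    _ < n * #(monicIrreducibles F n) + q ^ (n / 2 + 1) := by
      gcongr
      exact Nat.geomSum_lt hq fun d hd => Finset.mem_range.mp hd

theorem card_monicIrreducibles_ge (hq : 3 ≤ Fintype.card F) {n : ℕ} (hn : 12 ≤ n) :
    99 * Fintype.card F ^ n ≤ 100 * (n * #(monicIrreducibles F n)) := by
  have := pow_card_lt_mul_card_monicIrreducibles_add (F := F) n
  set q := Fintype.card F
  have hgap : 100 * q ^ (n / 2 + 1) ≤ q ^ n := by
    have h5 : 3 ^ 5 ≤ q ^ (n - (n / 2 + 1)) :=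
      (Nat.pow_le_pow_left hq 5).trans (Nat.pow_le_pow_right (by omega) (by omega))
    calc 100 * q ^ (n / 2 + 1) ≤ q ^ (n - (n / 2 + 1)) * q ^ (n / 2 + 1) := by
          gcongr; exact le_trans (by norm_num) h5
      _ = q ^ n := by rw [← pow_add]; congr 1; omega
  omega

end Polynomial

open Real Filter

theorem log_div_le_sum_Ico_inv_sub {a : ℝ} {m k : ℕ} (ha : a < m) (hmk : m ≤ k) :
    log ((k - a) / (m - a)) ≤ ∑ n ∈ Ico m k, (n - a)⁻¹ := by
  induction k, hmk using Nat.le_induction with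
  | base => simp [div_self (sub_pos.mpr ha).ne']
  | succ k hmk ih =>
    have hm : 0 < (m : ℝ) - a := sub_pos.mpr ha
    have hk : 0 < (k : ℝ) - a := hm.trans_le (by gcongr)
    have hstep : log (1 + (k - a)⁻¹) ≤ (k - a)⁻¹ := by
      simpa using log_le_sub_one_of_pos (x := 1 + (k - a)⁻¹) (by positivity)
    rw [Finset.sum_Ico_succ_top hmk]
    calc log ((↑(k + 1) - a) / (m - a))
        = log ((k - a) / (m - a) * (1 + (k - a)⁻¹)) := by
          congr 1; push_cast; field_simp; ring
      _ = log ((k - a) / (m - a)) + log (1 + (k - a)⁻¹) :=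
          log_mul (by positivity) (by positivity)
      _ ≤ _ := add_le_add ih hstep

theorem div_add_le_log_div {u v : ℝ} (hu : 0 ≤ u) (hv : 0 ≤ v) :
    u / (1 + v + u) ≤ log ((1 + v + u) / (1 + v)) := by
  have h := one_sub_inv_le_log_of_pos (x := (1 + v + u) / (1 + v)) (by positivity)
  rwa [inv_div, one_sub_div (by positivity), add_sub_cancel_left] at h

theorem mul_div_le_log_resonator_factor {ψ s : ℝ} (hψ₀ : 0 ≤ ψ) (hψ : ψ ≤ 1 / 100)
    (hs : 1 ≤ s) :
    50 / 51 * (ψ / s) ≤ log ((1 + ψ ^ 2 + ψ / s) / (1 + ψ ^ 2)) := by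
  have hu : ψ / s ≤ ψ := div_le_self hψ₀ hs
  have hden : 1 + ψ ^ 2 + ψ / s ≤ 51 / 50 := by nlinarith
  calc 50 / 51 * (ψ / s) = ψ / s / (51 / 50) := by ring
    _ ≤ ψ / s / (1 + ψ ^ 2 + ψ / s) := by gcongr
    _ ≤ _ := div_add_le_log_div (by positivity) (by positivity)

theorem mul_sqrt_le_resonator_bound {x y z γ L T : ℝ} (hx : 0 < x) (hy : 0 < y) (hz : 0 < z)
    (hγ : 0 < γ) (hL : 1.09 ≤ L) (hT : 0 < T) (hlogT : log T = γ * z)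
    (h2 : 100 * log 2 ≤ γ * z) (hyz : z + L * T ≤ y / 100) :
    γ * √(x * z / y) ≤
      50 / 51 * (99 / 100) * √(x * y / z) / ((y + z) / L + T) * log (T / 2) := by
  have hLpos : 0 < L := by linarith
  have hlog : 99 / 100 * (γ * z) ≤ log (T / 2) := by
    rw [log_div hT.ne' two_ne_zero, hlogT]; linarith
  have hden : (y + z) / L + T ≤ 101 / 100 * y / L := by
    rw [div_add' _ _ _ hLpos.ne', div_le_div_iff_of_pos_right hLpos]; linarith
  have hsqrt : √(x * z / y) = √(x * y / z) * (z / y) := by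
    rw [← sqrt_sq (div_nonneg hz.le hy.le), ← sqrt_mul (by positivity)]
    congr 1; field_simp
  calc γ * √(x * z / y) = γ * (√(x * y / z) * (z / y)) := by rw [hsqrt]
    -- the constant losses, (50/51)(99/100)²(100/101) ≈ 0.95, are paid for by `L ≥ 1.09`
    _ ≤ 50 / 51 * (99 / 100) * (99 / 100) / (101 / 100) * L * (γ * (√(x * y / z) * (z / y))) :=
        le_mul_of_one_le_left (by positivity) (by nlinarith)
    _ = 50 / 51 * (99 / 100) * √(x * y / z) / (101 / 100 * y / L) * (99 / 100 * (γ * z)) := by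
        field_simp
    _ ≤ _ := by gcongr

theorem isLittleO_rpow_id_atTop {γ : ℝ} (hγ : γ < 1) :
    (fun w : ℝ => w ^ γ) =o[atTop] id := by
  refine (Asymptotics.isLittleO_iff_tendsto' ?_).mpr ?_
  · filter_upwards [eventually_gt_atTop 0] with w hw h
    exact absurd h hw.ne'
  · refine (tendsto_rpow_neg_atTop (sub_pos.mpr hγ)).congr' ?_
    filter_upwards [eventually_gt_atTop 0] with w hw
    rw [id, ← rpow_sub_one hw.ne', neg_sub]

theorem eventually_log_add_rpow_mul_le {γ : ℝ} (hγ : γ < 1) (L : ℝ) {ε : ℝ}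
    (hε : 0 < ε) :
    ∀ᶠ w in atTop, log w + L * w ^ γ ≤ ε * w := by
  have hlittleO := isLittleO_log_id_atTop.add ((isLittleO_rpow_id_atTop hγ).const_mul_left L)
  filter_upwards [hlittleO.bound hε, eventually_ge_atTop 0] with w hw hw₀
  rw [norm_eq_abs, norm_eq_abs, id, abs_of_nonneg hw₀] at hw
  exact (le_abs_self _).trans hw

noncomputable def resonatorScale (N : ℝ) : ℝ :=
  √(log N * log (log N) / log (log (log N)))

section Resonator

variable {F : Type*} [Fintype F]

variable (F) in
noncomputable def resonatorShift (N : ℝ) : ℝ :=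
  logb (Fintype.card F) (log N * log (log N))

theorem resonatorShift_eq {N : ℝ} (hx : 0 < log N) (hy : 0 < log (log N)) :
    resonatorShift F N = (log (log N) + log (log (log N))) / log (Fintype.card F) := by
  rw [resonatorShift, logb, log_mul hx.ne' hy.ne']

variable [Field F]

variable (F) in
noncomputable def resonatorFactor (N : ℝ) (P : F[X]) : ℝ :=
  (1 + resonatorPsi F N P ^ 2 +
      resonatorPsi F N P / √((Fintype.card F : ℝ) ^ P.natDegree)) /
    (1 + resonatorPsi F N P ^ 2)

theorem resonatorPsi_eq (N : ℝ) (P : F[X]) :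
    resonatorPsi F N P = resonatorScale N / √((Fintype.card F : ℝ) ^ P.natDegree) /
      (P.natDegree - resonatorShift F N) := rfl

theorem logb_card_mul_log_mul_log {N r : ℝ} (hx : 0 < log N) (hy : 0 < log (log N)) :
    logb (Fintype.card F) ((Fintype.card F : ℝ) ^ r * log N * log (log N)) =
      r + resonatorShift F N := by
  have hq : (1 : ℝ) < Fintype.card F := by exact_mod_cast Fintype.one_lt_card
  rw [mul_assoc, logb_mul (by positivity) (by positivity), logb_rpow (by linarith) hq.ne',
    resonatorShift]

theorem resonatorPrimes_eq_biUnion [DecidableEq F] {γ N : ℝ} (hx : 0 < log N)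
    (hy : 0 < log (log N)) (ha : 0 ≤ resonatorShift F N) :
    resonatorPrimes F γ N = ↑((Ico (⌊resonatorShift F N + 1⌋₊ + 1)
      (⌊resonatorShift F N + log (log N) ^ γ⌋₊ + 1)).biUnion (monicIrreducibles F)) := by
  have hT : 0 ≤ log (log N) ^ γ := by positivity
  have hlow := logb_card_mul_log_mul_log (F := F) (r := 1) hx hy
  have hhigh := logb_card_mul_log_mul_log (F := F) (r := log (log N) ^ γ) hx hy
  rw [rpow_one] at hlow
  ext P
  simp only [resonatorPrimes, Set.mem_ofPred_eq, hlow, hhigh, coe_biUnion, coe_Ico, Set.mem_iUnion,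
    Set.mem_Ico, mem_coe, mem_monicIrreducibles, exists_prop]
  constructor
  · rintro ⟨hmonic, hirr, hlt, hle⟩
    refine ⟨P.natDegree, ⟨?_, ?_⟩, hmonic, hirr, rfl⟩
    · exact Nat.succ_le_of_lt ((Nat.floor_lt (by positivity)).mpr (by linarith))
    · exact Nat.lt_succ_of_le (Nat.le_floor (by linarith))
  · rintro ⟨n, ⟨hlt, hle⟩, hmonic, hirr, rfl⟩
    refine ⟨hmonic, hirr, ?_, ?_⟩
    · have := (Nat.floor_lt (by positivity)).mp (Nat.lt_of_succ_le hlt)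
      linarith
    · have := (Nat.le_floor_iff (by positivity)).mp (Nat.le_of_lt_succ hle)
      linarith

theorem mul_le_card_pow_of_resonatorShift_add_one_le {N : ℝ} (hx : 0 < log N)
    (hy : 0 < log (log N)) {n : ℕ} (hn : resonatorShift F N + 1 ≤ n) :
    (Fintype.card F : ℝ) * (log N * log (log N)) ≤ (Fintype.card F : ℝ) ^ n := by
  have hq : (1 : ℝ) < Fintype.card F := by exact_mod_cast Fintype.one_lt_card
  calc (Fintype.card F : ℝ) * (log N * log (log N))
      = (Fintype.card F : ℝ) ^ (resonatorShift F N + 1) := by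
        rw [rpow_add (by positivity), rpow_one, resonatorShift,
          rpow_logb (by positivity) hq.ne' (by positivity), mul_comm]
    _ ≤ (Fintype.card F : ℝ) ^ (n : ℝ) := rpow_le_rpow_of_exponent_le hq.le hn
    _ = (Fintype.card F : ℝ) ^ n := rpow_natCast _ _

theorem resonatorPsi_nonneg {N : ℝ} {P : F[X]} (hP : resonatorShift F N < P.natDegree) :
    0 ≤ resonatorPsi F N P :=
  div_nonneg (by positivity) (sub_nonneg.mpr hP.le)

theorem resonatorPsi_le {N : ℝ} (hx : 0 < log N) (hy : 0 < log (log N))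
    (hz : 10 ^ 4 ≤ log (log (log N))) {P : F[X]} (hP : resonatorShift F N + 1 ≤ P.natDegree) :
    resonatorPsi F N P ≤ 1 / 100 := by
  have hq : (1 : ℝ) ≤ Fintype.card F := by exact_mod_cast Fintype.card_pos
  have hcard := mul_le_card_pow_of_resonatorShift_add_one_le hx hy hP
  rw [resonatorPsi_eq]
  calc resonatorScale N / √((Fintype.card F : ℝ) ^ P.natDegree) /
        (P.natDegree - resonatorShift F N)
      ≤ resonatorScale N / √((Fintype.card F : ℝ) ^ P.natDegree) :=
        div_le_self (by rw [resonatorScale]; positivity) (by linarith)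
    _ = √(log N * log (log N) / log (log (log N)) / (Fintype.card F : ℝ) ^ P.natDegree) := by
        rw [resonatorScale, ← sqrt_div' _ (by positivity)]
    _ ≤ 1 / 100 := by
        rw [sqrt_le_left (by norm_num), div_div, div_le_iff₀ (by positivity)]
        calc log N * log (log N) ≤ (Fintype.card F : ℝ) * (log N * log (log N)) :=
              le_mul_of_one_le_left (by positivity) hq
          _ ≤ (Fintype.card F : ℝ) ^ P.natDegree := hcard
          _ ≤ (1 / 100) ^ 2 * (log (log (log N)) * (Fintype.card F : ℝ) ^ P.natDegree) := by
              nlinarith [pow_pos (show (0 : ℝ) < Fintype.card F by linarith) P.natDegree]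

theorem log_resonatorFactor_ge {N : ℝ} (hx : 0 < log N) (hy : 0 < log (log N))
    (hz : 10 ^ 4 ≤ log (log (log N))) {P : F[X]} (hP : resonatorShift F N + 1 ≤ P.natDegree) :
    50 / 51 * (resonatorScale N /
        ((Fintype.card F : ℝ) ^ P.natDegree * (P.natDegree - resonatorShift F N))) ≤
      log (resonatorFactor F N P) := by
  have hq : (1 : ℝ) ≤ Fintype.card F := by exact_mod_cast Fintype.card_pos
  have hs : 1 ≤ √((Fintype.card F : ℝ) ^ P.natDegree) := one_le_sqrt.mpr (one_le_pow₀ hq)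
  have hψs : resonatorPsi F N P / √((Fintype.card F : ℝ) ^ P.natDegree) = resonatorScale N /
      ((Fintype.card F : ℝ) ^ P.natDegree * (P.natDegree - resonatorShift F N)) := by
    rw [resonatorPsi_eq, div_div, div_div, mul_comm (_ - _), ← mul_assoc,
      mul_self_sqrt (by positivity)]
  rw [← hψs]
  exact mul_div_le_log_resonator_factor (resonatorPsi_nonneg (by linarith))
    (resonatorPsi_le hx hy hz hP) hs

theorem sum_log_resonatorFactor_ge [DecidableEq F] (hq : 3 ≤ Fintype.card F) {N : ℝ}
    (hx : 0 < log N) (hy : 0 < log (log N)) (hz : 10 ^ 4 ≤ log (log (log N))) {n : ℕ}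
    (hn : resonatorShift F N + 1 ≤ n) (hn₁₂ : 12 ≤ n) :
    50 / 51 * (99 / 100) * (resonatorScale N / (n * (n - resonatorShift F N))) ≤
      ∑ P ∈ monicIrreducibles F n, log (resonatorFactor F N P) := by
  set a := resonatorShift F N
  set c := resonatorScale N
  set Q := (Fintype.card F : ℝ) ^ n
  have hQ : 0 < Q := by positivity
  have hna : 0 < (n : ℝ) - a := by linarith
  have hc : 0 ≤ c := sqrt_nonneg _
  have hcard : 99 / 100 * Q / n ≤ #(monicIrreducibles F n) := by
    have h : (99 : ℝ) * Q ≤ 100 * (n * #(monicIrreducibles F n)) := by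
      simp only [Q]; exact_mod_cast card_monicIrreducibles_ge hq hn₁₂
    rw [div_le_iff₀ (by positivity)]
    linarith
  calc 50 / 51 * (99 / 100) * (c / (n * (n - a)))
      = 99 / 100 * Q / n * (50 / 51 * (c / (Q * (n - a)))) := by field_simp
    _ ≤ #(monicIrreducibles F n) * (50 / 51 * (c / (Q * (n - a)))) := by gcongr
    _ = ∑ _P ∈ monicIrreducibles F n, 50 / 51 * (c / (Q * (n - a))) := by
        rw [sum_const, nsmul_eq_mul]
    _ ≤ ∑ P ∈ monicIrreducibles F n, log (resonatorFactor F N P) := sum_le_sum fun P hP => by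
        obtain ⟨-, -, rfl⟩ := mem_monicIrreducibles.mp hP
        exact log_resonatorFactor_ge hx hy hz hn

theorem resonatorFactor_pos {N : ℝ} {P : F[X]} (hP : resonatorShift F N < P.natDegree) :
    0 < resonatorFactor F N P := by
  have := resonatorPsi_nonneg hP
  rw [resonatorFactor]
  positivity

theorem log_finprod_resonatorFactor_ge (hq : 3 ≤ Fintype.card F) {γ N : ℝ} (hx : 0 < log N)
    (hy : 0 < log (log N)) (hz : 10 ^ 4 ≤ log (log (log N))) (ha : 11 ≤ resonatorShift F N)
    (hT : 1 ≤ log (log N) ^ γ) :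
    50 / 51 * (99 / 100) * resonatorScale N / (resonatorShift F N + log (log N) ^ γ) *
        log (log (log N) ^ γ / 2) ≤
      log (∏ᶠ P ∈ resonatorPrimes F γ N, resonatorFactor F N P) := by
  classical
  set a := resonatorShift F N
  set T := log (log N) ^ γ
  set c := resonatorScale N
  have hc : 0 ≤ c := sqrt_nonneg _
  set m := ⌊a + 1⌋₊ + 1
  set k := ⌊a + T⌋₊ + 1
  have hm : a + 1 < m := by push_cast [m]; exact Nat.lt_floor_add_one _
  have hm' : (m : ℝ) ≤ a + 2 := by
    have := Nat.floor_le (show 0 ≤ a + 1 by linarith)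
    push_cast [m]; linarith
  have hk : a + T < k := by push_cast [k]; exact Nat.lt_floor_add_one _
  have hmk : m ≤ k := by
    simp only [m, k]; gcongr
  have hdeg : ∀ n ∈ Ico m k, a + 1 < n ∧ (n : ℝ) ≤ a + T := fun n hn => by
    obtain ⟨hmn, hnk⟩ := mem_Ico.mp hn
    exact ⟨hm.trans_le (by exact_mod_cast hmn),
      Nat.le_floor_iff (by linarith) |>.mp (Nat.le_of_lt_succ hnk)⟩
  have hharmonic : log (T / 2) ≤ ∑ n ∈ Ico m k, ((n : ℝ) - a)⁻¹ := by
    refine (log_le_log (by positivity) ?_).trans (log_div_le_sum_Ico_inv_sub (by linarith) hmk)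
    rw [div_le_div_iff₀ (by norm_num) (by linarith)]
    nlinarith
  rw [resonatorPrimes_eq_biUnion hx hy (by linarith), finprod_mem_coe_finset,
    log_prod fun P hP => (resonatorFactor_pos ?_).ne',
    sum_biUnion (pairwiseDisjoint_monicIrreducibles _)]
  · calc 50 / 51 * (99 / 100) * c / (a + T) * log (T / 2)
        ≤ 50 / 51 * (99 / 100) * c / (a + T) * ∑ n ∈ Ico m k, ((n : ℝ) - a)⁻¹ := by
          gcongr
      _ = ∑ n ∈ Ico m k, 50 / 51 * (99 / 100) * c / (a + T) * ((n : ℝ) - a)⁻¹ :=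
          mul_sum _ _ _
      _ ≤ ∑ n ∈ Ico m k, 50 / 51 * (99 / 100) * (c / (n * (n - a))) :=
          sum_le_sum fun n hn => by
          obtain ⟨hlow, hhigh⟩ := hdeg n hn
          have hna : 0 < (n : ℝ) - a := by linarith
          rw [← div_eq_mul_inv, div_div, mul_div_assoc]
          gcongr
          exact mul_pos (by linarith) hna
      _ ≤ _ := sum_le_sum fun n hn => by
          obtain ⟨hlow, -⟩ := hdeg n hn
          exact sum_log_resonatorFactor_ge hq hx hy hz hlow.le
            (by exact_mod_cast (show (12 : ℝ) ≤ n by linarith))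
  · obtain ⟨n, hn, hP⟩ := mem_biUnion.mp hP
    rw [(mem_monicIrreducibles.mp hP).2.2]
    linarith [(hdeg n hn).1]

theorem le_log_finprod_resonatorFactor (hq : 3 ≤ Fintype.card F) {γ N : ℝ} (hγ : 0 < γ)
    (hx : 0 < log N) (hy : 0 < log (log N)) (hz : 10 ^ 4 ≤ log (log (log N)))
    (h2 : 100 * log 2 ≤ γ * log (log (log N)))
    (hyz : log (log (log N)) + log (Fintype.card F) * log (log N) ^ γ ≤ log (log N) / 100) :
    γ * √(log N * log (log (log N)) / log (log N)) ≤
      log (∏ᶠ P ∈ resonatorPrimes F γ N, resonatorFactor F N P) := by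
  have hL : 1.09 ≤ log (Fintype.card F) := by
    have : log 3 ≤ log (Fintype.card F) := log_le_log (by norm_num) (by exact_mod_cast hq)
    linarith [log_three_gt_d9]
  have hT : 1 ≤ log (log N) ^ γ :=
    one_le_rpow (le_of_lt ((log_pos_iff hy.le).mp (by linarith))) hγ.le
  have ha : 11 ≤ resonatorShift F N := by
    rw [resonatorShift_eq hx hy, le_div_iff₀ (by linarith)]
    nlinarith
  calc γ * √(log N * log (log (log N)) / log (log N))
      ≤ 50 / 51 * (99 / 100) * resonatorScale N /
          ((log (log N) + log (log (log N))) / log (Fintype.card F) + log (log N) ^ γ) *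
          log (log (log N) ^ γ / 2) :=
        mul_sqrt_le_resonator_bound hx hy (by linarith) hγ hL (by linarith) (log_rpow hy γ) h2
          hyz
    _ ≤ _ := by
        rw [← resonatorShift_eq hx hy]
        exact log_finprod_resonatorFactor_ge hq hx hy hz ha hT

end Resonator

/-- For q ≥ 3 fixed and γ ∈ (0,1), as N → ∞,
ln A_N ≥ (γ + o(1)) sqrt(ln N · ln ln ln N / ln ln N), where
A_N = prod over P in 𝕡 of (1 + psi(P)^2 + psi(P)|P|^{-1/2})/(1 + psi(P)^2). -/
theorem stmt_18 {F : Type*} [Field F] [Fintype F] (hq : 3 ≤ Fintype.card F)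
    (γ : ℝ) (hγ : γ ∈ Set.Ioo (0 : ℝ) 1) (ε : ℝ) (hε : 0 < ε) :
    ∃ N₀ : ℝ, ∀ N : ℝ, N₀ ≤ N →
      (γ - ε) * Real.sqrt (Real.log N * Real.log (Real.log (Real.log N)) /
          Real.log (Real.log N)) ≤
        Real.log (∏ᶠ P ∈ resonatorPrimes F γ N,
          (1 + resonatorPsi F N P ^ 2 +
              resonatorPsi F N P / Real.sqrt ((Fintype.card F : ℝ) ^ P.natDegree)) /
            (1 + resonatorPsi F N P ^ 2)) := by
  obtain ⟨hγ₀, hγ₁⟩ := hγ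
  have hx : Tendsto (fun N : ℝ => log N) atTop atTop := tendsto_log_atTop
  have hy : Tendsto (fun N : ℝ => log (log N)) atTop atTop := tendsto_log_atTop.comp hx
  have hz : Tendsto (fun N : ℝ => log (log (log N))) atTop atTop := tendsto_log_atTop.comp hy
  obtain ⟨N₀, hN₀⟩ := eventually_atTop.mp <| (hx.eventually_gt_atTop 0).and <|
    (hy.eventually_gt_atTop 0).and <| (hz.eventually_ge_atTop (10 ^ 4)).and <|
    ((hz.const_mul_atTop hγ₀).eventually_ge_atTop (100 * log 2)).and <|
    hy.eventually (eventually_log_add_rpow_mul_le hγ₁ (log (Fintype.card F))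
      (by norm_num : (0 : ℝ) < 1 / 100))
  refine ⟨N₀, fun N hN => ?_⟩
  obtain ⟨h₁, h₂, h₃, h₄, h₅⟩ := hN₀ N hN
  calc (γ - ε) * √(log N * log (log (log N)) / log (log N))
      ≤ γ * √(log N * log (log (log N)) / log (log N)) := by gcongr; linarith
    _ ≤ _ := le_log_finprod_resonatorFactor hq hγ₀ h₁ h₂ h₃ h₄ (by linarith)
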